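/- arXiv:2006.02145 — 4 statements merged into one kernel-verified Lean document; each statement's English description precedes it below -/
import Mathlib

section
/- A matrix B ∈ M_{nr}(R) satisfies B·u = u·B if and only if B lies in the image of φ; that is, the centraliser of u in the matrix ring M_{nr}(R) is exactly the set of block lower-triangular block-Toeplitz matrices φ(M) with M ∈ M_n(R[X]/(X^r)). -/
/-! Write `u = 1 + N` with `N` the block shift, so `B` commutes with `u` iff it commutes with `N`.
Entrywise, `B N = N B` says `B_{i,j+1} = B_{i-1,j}` (with `B_{-1,j} = 0`), so by induction on `j`
the block `B_{i,j}` equals `B_{i-j,0}` for `i ≥ j` and vanishes for `i < j`: `B` is the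
block-Toeplitz matrix built from its first block column. Every such matrix is some `φ(M)`
because every element of `R[X]/(X^r)` is `∑_{t<r} a_t π^t`, as `p ≡ ∑_{t<r} p_t X^t`
mod `X^r`. -/

open Polynomial

noncomputable abbrev TruncPoly (R : Type*) [CommRing R] (r : ℕ) : Type _ :=
  AdjoinRoot ((X : R[X]) ^ r)

/-- The element `∑_{t=0}^{r-1} A_t π^t` of `M_n(R[X]/(X^r))` determined by the family of
coefficient matrices `A : Fin r → M_n(R)`, where `π` is the image of `X`. -/
noncomputable def toQuot (R : Type*) [CommRing R] (n r : ℕ)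
    (A : Fin r → Matrix (Fin n) (Fin n) R) :
    Matrix (Fin n) (Fin n) (TruncPoly R r) :=
  ∑ t : Fin r,
    (AdjoinRoot.root ((X : R[X]) ^ r)) ^ (t : ℕ) •
      (A t).map (fun x => AdjoinRoot.of ((X : R[X]) ^ r) x)

def blockMat (R : Type*) [CommRing R] (n r : ℕ) (A : Fin r → Matrix (Fin n) (Fin n) R) :
    Matrix (Fin r × Fin n) (Fin r × Fin n) R :=
  fun p q =>
    if ((q.1 : ℕ) ≤ (p.1 : ℕ)) then
      A ⟨(p.1 : ℕ) - (q.1 : ℕ), lt_of_le_of_lt (Nat.sub_le _ _) p.1.isLt⟩ p.2 q.2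
    else 0

def uMat (R : Type*) [CommRing R] (n r : ℕ) : Matrix (Fin r × Fin n) (Fin r × Fin n) R :=
  fun p q => if p.2 = q.2 ∧ ((p.1 : ℕ) = (q.1 : ℕ) ∨ (p.1 : ℕ) = (q.1 : ℕ) + 1) then 1 else 0

def shiftMat (R : Type*) [CommRing R] (n r : ℕ) : Matrix (Fin r × Fin n) (Fin r × Fin n) R :=
  fun p q => if p.2 = q.2 ∧ (p.1 : ℕ) = q.1 + 1 then 1 else 0

section

variable {R : Type*} [CommRing R] {n r : ℕ}

theorem uMat_eq_one_add_shiftMat : uMat R n r = 1 + shiftMat R n r := by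
  ext p q
  simp only [uMat, shiftMat, Matrix.add_apply, Matrix.one_apply, Prod.ext_iff, Fin.ext_iff]
  split_ifs <;> first | omega | simp_all

theorem mul_shiftMat_apply (B : Matrix (Fin r × Fin n) (Fin r × Fin n) R) (p q : Fin r × Fin n) :
    (B * shiftMat R n r) p q =
      if h : (q.1 : ℕ) + 1 < r then B p (⟨q.1 + 1, h⟩, q.2) else 0 := by
  rw [Matrix.mul_apply]
  split_ifs with h
  · rw [Fintype.sum_eq_single (⟨q.1 + 1, h⟩, q.2)]
    · simp [shiftMat]
    · intro s hs
      simp only [shiftMat, mul_ite, mul_one, mul_zero, ite_eq_right_iff, and_imp]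
      intro h2 h1
      exact (hs (Prod.ext (Fin.ext h1) h2)).elim
  · refine Finset.sum_eq_zero fun s _ => ?_
    simp only [shiftMat, mul_ite, mul_one, mul_zero, ite_eq_right_iff, and_imp]
    intro _ h1
    exact absurd (h1 ▸ s.1.isLt) h

theorem shiftMat_mul_apply (B : Matrix (Fin r × Fin n) (Fin r × Fin n) R) (p q : Fin r × Fin n) :
    (shiftMat R n r * B) p q =
      if h : 0 < (p.1 : ℕ) then B (⟨p.1 - 1, by omega⟩, p.2) q else 0 := by
  rw [Matrix.mul_apply]
  split_ifs with h
  · rw [Fintype.sum_eq_single (⟨p.1 - 1, by omega⟩, p.2)]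
    · simp [shiftMat]; omega
    · intro s hs
      simp only [shiftMat, ite_mul, one_mul, zero_mul, ite_eq_right_iff, and_imp]
      intro h2 h1
      exact (hs (Prod.ext (Fin.ext (by simp only; omega)) h2.symm)).elim
  · refine Finset.sum_eq_zero fun s _ => ?_
    simp only [shiftMat, ite_mul, one_mul, zero_mul, ite_eq_right_iff, and_imp]
    omega

theorem mul_uMat_eq_uMat_mul_iff (B : Matrix (Fin r × Fin n) (Fin r × Fin n) R) :
    B * uMat R n r = uMat R n r * B ↔ B * shiftMat R n r = shiftMat R n r * B := by
  simp only [uMat_eq_one_add_shiftMat, mul_add, add_mul, mul_one, one_mul, add_right_inj]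

def firstBlockCol (B : Matrix (Fin r × Fin n) (Fin r × Fin n) R) (t : Fin r) :
    Matrix (Fin n) (Fin n) R :=
  fun a b => B (t, a) (⟨0, t.pos⟩, b)

theorem eq_blockMat_firstBlockCol_of_commute {B : Matrix (Fin r × Fin n) (Fin r × Fin n) R}
    (hB : B * shiftMat R n r = shiftMat R n r * B) : B = blockMat R n r (firstBlockCol B) := by
  have shift : ∀ (i j : ℕ) (hi : i < r) (hj : j + 1 < r) (a b : Fin n),
      B (⟨i, hi⟩, a) (⟨j + 1, hj⟩, b) =
        if h : 0 < i then B (⟨i - 1, by omega⟩, a) (⟨j, by omega⟩, b) else 0 := by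
    intro i j hi hj a b
    have := congrFun (congrFun hB (⟨i, hi⟩, a)) (⟨j, by omega⟩, b)
    rwa [mul_shiftMat_apply, shiftMat_mul_apply, dif_pos hj] at this
  suffices h : ∀ (j i : ℕ) (hi : i < r) (hj : j < r) (a b : Fin n),
      B (⟨i, hi⟩, a) (⟨j, hj⟩, b) =
        blockMat R n r (firstBlockCol B) (⟨i, hi⟩, a) (⟨j, hj⟩, b) by
    ext ⟨⟨i, hi⟩, a⟩ ⟨⟨j, hj⟩, b⟩
    exact h j i hi hj a b
  intro j
  induction j with
  | zero => intro i hi hj a b; simp [blockMat, firstBlockCol]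
  | succ j ih =>
    intro i hi hj a b
    rw [shift i j hi hj]
    split_ifs with h
    · rw [ih]
      simp only [blockMat, firstBlockCol, Nat.sub_sub, Nat.add_comm 1 j, Nat.le_sub_iff_add_le h]
    · simp [blockMat]; omega

theorem blockMat_mul_shiftMat (A : Fin r → Matrix (Fin n) (Fin n) R) :
    blockMat R n r A * shiftMat R n r = shiftMat R n r * blockMat R n r A := by
  ext ⟨⟨i, hi⟩, a⟩ ⟨⟨j, hj⟩, b⟩
  simp only [mul_shiftMat_apply, shiftMat_mul_apply, blockMat]
  split_ifs <;> first | rfl | omega | simp only [Nat.sub_sub, Nat.add_comm 1 j]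

theorem mul_uMat_eq_uMat_mul_iff_exists_blockMat (B : Matrix (Fin r × Fin n) (Fin r × Fin n) R) :
    B * uMat R n r = uMat R n r * B ↔ ∃ A, blockMat R n r A = B := by
  rw [mul_uMat_eq_uMat_mul_iff]
  refine ⟨fun hB => ⟨_, (eq_blockMat_firstBlockCol_of_commute hB).symm⟩, ?_⟩
  rintro ⟨A, rfl⟩
  exact blockMat_mul_shiftMat A

end

theorem AdjoinRoot.mk_X_pow_eq_sum {R : Type*} [CommRing R] (r : ℕ) (p : R[X]) :
    AdjoinRoot.mk (X ^ r) p =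
      ∑ t : Fin r,
        AdjoinRoot.root (X ^ r : R[X]) ^ (t : ℕ) * AdjoinRoot.of (X ^ r) (p.coeff t) := by
  have hdvd : X ^ r ∣ p - ∑ t : Fin r, monomial t (p.coeff t) := by
    refine X_pow_dvd_iff.mpr fun d hd => ?_
    rw [coeff_sub, finsetSum_coeff, Fintype.sum_eq_single ⟨d, hd⟩]
    · simp
    · intro t ht
      rw [coeff_monomial, if_neg fun h => ht (Fin.ext h)]
  rw [AdjoinRoot.mk_eq_mk.mpr hdvd, map_sum]
  refine Finset.sum_congr rfl fun t _ => ?_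
  rw [← C_mul_X_pow_eq_monomial, map_mul, AdjoinRoot.mk_C, map_pow, AdjoinRoot.mk_X, mul_comm]

theorem toQuot_apply {R : Type*} [CommRing R] {n r : ℕ} (A : Fin r → Matrix (Fin n) (Fin n) R)
    (a b : Fin n) :
    toQuot R n r A a b =
      ∑ t : Fin r,
        AdjoinRoot.root (X ^ r : R[X]) ^ (t : ℕ) * AdjoinRoot.of (X ^ r) (A t a b) := by
  simp [toQuot, Matrix.sum_apply]

theorem toQuot_surjective (R : Type*) [CommRing R] (n r : ℕ) :
    Function.Surjective (toQuot R n r) := by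
  intro M
  choose p hp using fun a b => AdjoinRoot.mk_surjective (M a b)
  refine ⟨fun t => Matrix.of fun a b => (p a b).coeff t, ?_⟩
  ext a b
  rw [toQuot_apply, ← hp, AdjoinRoot.mk_X_pow_eq_sum]
  rfl

theorem stmt1_general (R : Type*) [CommRing R] (n r : ℕ)
    (φ : Matrix (Fin n) (Fin n) (TruncPoly R r) → Matrix (Fin r × Fin n) (Fin r × Fin n) R)
    (hφ : ∀ A : Fin r → Matrix (Fin n) (Fin n) R, φ (toQuot R n r A) = blockMat R n r A)
    (B : Matrix (Fin r × Fin n) (Fin r × Fin n) R) :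
    B * uMat R n r = uMat R n r * B ↔
      ∃ M : Matrix (Fin n) (Fin n) (TruncPoly R r), φ M = B := by
  rw [mul_uMat_eq_uMat_mul_iff_exists_blockMat]
  constructor
  · rintro ⟨A, rfl⟩
    exact ⟨_, hφ A⟩
  · rintro ⟨M, rfl⟩
    obtain ⟨A, rfl⟩ := toQuot_surjective R n r M
    exact ⟨A, (hφ A).symm⟩

/-- A matrix `B ∈ M_{nr}(R)` commutes with `u` if and only if `B` lies in the image of `φ`:
the centraliser of `u` in `M_{nr}(R)` is exactly the set of block lower-triangular
block-Toeplitz matrices `φ(M)` with `M ∈ M_n(R[X]/(X^r))`. -/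
theorem stmt1 (R : Type*) [CommRing R] (n r : ℕ) (hn : 0 < n) (hr : 0 < r)
    (φ : Matrix (Fin n) (Fin n) (TruncPoly R r) → Matrix (Fin r × Fin n) (Fin r × Fin n) R)
    (hφ : ∀ A : Fin r → Matrix (Fin n) (Fin n) R, φ (toQuot R n r A) = blockMat R n r A)
    (B : Matrix (Fin r × Fin n) (Fin r × Fin n) R) :
    B * uMat R n r = uMat R n r * B ↔
      ∃ M : Matrix (Fin n) (Fin n) (TruncPoly R r), φ M = B :=
  stmt1_general R n r φ hφ B
end

section
/- Let u, a, b, c, υ, x, y, z ∈ k and set, in M_2(k[ε]), A = [[1,u],[0,1]]·[[1+aε, bε],[cε, 1−aε]] and X = [[1,υ],[0,1]]·[[1+xε, yε],[zε, 1−xε]]. Then X·A = A·X if and only if c·υ = u·z and 2·u·x + u·υ·z = 2·a·υ + u·c·υ; in particular the condition does not involve b or y. -/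
/-- The matrix `[[1,u],[0,1]]·[[1+aε, bε],[cε, 1−aε]]` in `M_2(k[ε])`. -/
def dmat (k : Type*) [CommRing k] (u a b c : k) :
    Matrix (Fin 2) (Fin 2) (DualNumber k) :=
  !![1, algebraMap k (DualNumber k) u; 0, 1] *
    !![1 + algebraMap k (DualNumber k) a * DualNumber.eps,
        algebraMap k (DualNumber k) b * DualNumber.eps;
      algebraMap k (DualNumber k) c * DualNumber.eps,
        1 - algebraMap k (DualNumber k) a * DualNumber.eps]

/-!
A matrix over `k[ε]` is a pair `P₀ + P₁ ε` of matrices over `k`, and `(P Q)₀ = P₀ Q₀`,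
`(P Q)₁ = P₀ Q₁ + P₁ Q₀`. The `ε`-free parts of `A` and `X` are commuting unitriangular matrices,
so `X A = A X` reduces to an equation between the `ε`-parts, which is linear over `k`: its diagonal
entries give `c υ = u z`, its `(0, 1)` entry gives the second condition, and `b`, `y` cancel.
-/

open Matrix TrivSqZeroExt DualNumber

namespace Matrix

variable {R l m n : Type*}

theorem dualNumber_ext_iff {P Q : Matrix m n R[ε]} :
    P = Q ↔ P.map fst = Q.map fst ∧ P.map snd = Q.map snd := by
  refine ⟨fun h => h ▸ ⟨rfl, rfl⟩, fun ⟨h₁, h₂⟩ => ?_⟩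
  ext i j
  · exact congrFun₂ h₁ i j
  · exact congrFun₂ h₂ i j

variable [Semiring R] [Fintype m]

theorem map_fst_mul (P : Matrix l m R[ε]) (Q : Matrix m n R[ε]) :
    (P * Q).map fst = P.map fst * Q.map fst := by
  ext i j
  simp only [map_apply, mul_apply, fst_sum, fst_mul]

theorem map_snd_mul (P : Matrix l m R[ε]) (Q : Matrix m n R[ε]) :
    (P * Q).map snd = P.map fst * Q.map snd + P.map snd * Q.map fst := by
  ext i j
  simp only [map_apply, mul_apply, snd_sum, DualNumber.snd_mul, add_apply,
    Finset.sum_add_distrib]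

theorem dualNumber_mul_eq_mul_iff {P Q : Matrix m m R[ε]}
    (h : Commute (P.map fst) (Q.map fst)) :
    P * Q = Q * P ↔
      P.map fst * Q.map snd + P.map snd * Q.map fst =
        Q.map fst * P.map snd + Q.map snd * P.map fst := by
  rw [dualNumber_ext_iff, map_fst_mul, map_fst_mul, map_snd_mul, map_snd_mul]
  exact and_iff_right h.eq

end Matrix

section

variable {k : Type*} [CommRing k] (u a b c : k)

theorem dmat_map_fst : (dmat k u a b c).map fst = !![1, u; 0, 1] := by
  ext i j; fin_cases i <;> fin_cases j <;> simp [dmat, algebraMap_eq_inl]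

theorem dmat_map_snd : (dmat k u a b c).map snd = !![1, u; 0, 1] * !![a, b; c, -a] := by
  ext i j; fin_cases i <;> fin_cases j <;> simp [dmat, algebraMap_eq_inl]

theorem commute_unitriangular (v : k) : Commute !![1, u; 0, 1] !![1, v; 0, 1] := by
  simp [Commute, SemiconjBy, add_comm]

theorem unitriangular_traceless_cross_terms_eq_iff (υ x y z : k) :
    !![1, υ; 0, 1] * (!![1, u; 0, 1] * !![a, b; c, -a]) + !![1, υ; 0, 1] * !![x, y; z, -x] *
        !![1, u; 0, 1] =
      !![1, u; 0, 1] * (!![1, υ; 0, 1] * !![x, y; z, -x]) + !![1, u; 0, 1] * !![a, b; c, -a] *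
        !![1, υ; 0, 1] ↔
      c * υ = u * z ∧ 2 * u * x + u * υ * z = 2 * a * υ + u * c * υ := by
  simp only [mul_fin_two, of_add_of, add_cons, head_cons, tail_cons, empty_add_empty,
    EmbeddingLike.apply_eq_iff_eq, vecCons_inj, and_true]
  constructor
  · rintro ⟨⟨h₀₀, h₀₁⟩, -, -⟩
    exact ⟨by linear_combination h₀₀, by linear_combination h₀₁⟩
  · rintro ⟨h₁, h₂⟩
    exact ⟨⟨by linear_combination h₁, by linear_combination h₂⟩, by ring, by linear_combination -h₁⟩

end

/-- With `A = [[1,u],[0,1]]·[[1+aε, bε],[cε, 1−aε]]` and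
`X = [[1,υ],[0,1]]·[[1+xε, yε],[zε, 1−xε]]` in `M_2(k[ε])`, one has `X·A = A·X` if and only
if `c·υ = u·z` and `2·u·x + u·υ·z = 2·a·υ + u·c·υ`; in particular the condition does not
involve `b` or `y`. -/
theorem stmt9 (k : Type*) [CommRing k] (u a b c υ x y z : k) :
    dmat k υ x y z * dmat k u a b c = dmat k u a b c * dmat k υ x y z ↔
      (c * υ = u * z ∧ 2 * u * x + u * υ * z = 2 * a * υ + u * c * υ) := by
  rw [dualNumber_mul_eq_mul_iff (by simpa only [dmat_map_fst] using commute_unitriangular υ u),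
    dmat_map_fst, dmat_map_fst, dmat_map_snd, dmat_map_snd]
  exact unitriangular_traceless_cross_terms_eq_iff u a b c υ x y z
end

section
/- Suppose k is a field of characteristic different from 2 and u ≠ 0. Let a, b, c, υ, x, y, z ∈ k and set, in M_2(k[ε]), A = [[1,u],[0,1]]·[[1+aε, bε],[cε, 1−aε]] and X = [[1,υ],[0,1]]·[[1+xε, yε],[zε, 1−xε]]. Then X·A = A·X if and only if z = (c/u)·υ and x = −(c/(2u))·υ² + ((cu+2a)/(2u))·υ; in particular, for each fixed A the set of tuples (υ,x,y,z) with X·A = A·X is parametrised freely by the pair (υ, y) ∈ k². -/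
/-! The real parts `[[1,u],[0,1]]` and `[[1,υ],[0,1]]` commute, so the commutator is a multiple of
`ε`; its four entries give only two independent equations, linear in `x` and `z`, in which `y` and
`b` do not occur. -/

open DualNumber TrivSqZeroExt in
theorem dmat_mul_comm_iff {k : Type*} [CommRing k] (u a b c υ x y z : k) :
    dmat k υ x y z * dmat k u a b c = dmat k u a b c * dmat k υ x y z ↔
      υ * c = u * z ∧ 2 * u * x + u * υ * z = 2 * a * υ + u * c * υ := by
  simp only [dmat, Matrix.mul_fin_two, ← Matrix.ext_iff, Fin.forall_fin_two]
  simp only [TrivSqZeroExt.ext_iff, algebraMap_eq_inl', Algebra.algebraMap_self,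
    RingHom.id_apply, Matrix.of_apply, Matrix.cons_val', Matrix.cons_val_zero, Matrix.cons_val_one,
    Matrix.cons_val_fin_one, fst_add, fst_mul, fst_one, fst_inl, fst_eps, fst_sub, snd_add,
    TrivSqZeroExt.snd_mul, snd_one, snd_eps, snd_inl, snd_sub, smul_eq_mul, smul_zero, smul_add,
    smul_neg, one_smul, zero_smul, MulOpposite.op_zero, MulOpposite.op_one,
    MulOpposite.smul_eq_mul_unop, MulOpposite.unop_op, one_mul, zero_mul, mul_one, mul_zero,
    mul_neg, zero_add, add_zero, sub_zero, zero_sub, neg_zero, true_and]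
  constructor
  · rintro ⟨⟨h₀₀, -, h₀₁⟩, -⟩
    exact ⟨by linear_combination h₀₀, by linear_combination h₀₁⟩
  · rintro ⟨hz, hx⟩
    exact ⟨⟨by linear_combination hz, by ring, by linear_combination hx⟩, by ring,
      by linear_combination -hz⟩

theorem dmat_mul_comm_iff_of_ne_zero {k : Type*} [Field k] (h2 : (2 : k) ≠ 0) {u : k}
    (hu : u ≠ 0) (a b c υ x y z : k) :
    dmat k υ x y z * dmat k u a b c = dmat k u a b c * dmat k υ x y z ↔
      z = (c / u) * υ ∧ x = -(c / (2 * u)) * υ ^ 2 + ((c * u + 2 * a) / (2 * u)) * υ := by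
  rw [dmat_mul_comm_iff]
  constructor
  · rintro ⟨hz, hx⟩
    refine ⟨?_, ?_⟩ <;> field_simp
    · linear_combination -hz
    · linear_combination hx + υ * hz
  · rintro ⟨rfl, rfl⟩
    exact ⟨by field_simp, by field_simp; ring⟩

/-- Over a field `k` of characteristic `≠ 2` and with `u ≠ 0`: for
`A = [[1,u],[0,1]]·[[1+aε, bε],[cε, 1−aε]]` and `X = [[1,υ],[0,1]]·[[1+xε, yε],[zε, 1−xε]]`,
`X·A = A·X` iff `z = (c/u)·υ` and `x = −(c/(2u))·υ² + ((cu+2a)/(2u))·υ`; in particular, for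
fixed `A`, the commuting tuples `(υ,x,y,z)` are parametrised freely by `(υ,y) ∈ k²`. -/
theorem stmt10 (k : Type*) [Field k] (h2 : (2 : k) ≠ 0) (u : k) (hu : u ≠ 0)
    (a b c υ x y z : k) :
    (dmat k υ x y z * dmat k u a b c = dmat k u a b c * dmat k υ x y z ↔
      (z = (c / u) * υ ∧
        x = -(c / (2 * u)) * υ ^ 2 + ((c * u + 2 * a) / (2 * u)) * υ)) ∧
    (∀ υ' y' : k, ∃! p : k × k,
      dmat k υ' p.1 y' p.2 * dmat k u a b c = dmat k u a b c * dmat k υ' p.1 y' p.2) := by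
  refine ⟨dmat_mul_comm_iff_of_ne_zero h2 hu a b c υ x y z, fun υ' y' => ?_⟩
  simp only [dmat_mul_comm_iff_of_ne_zero h2 hu]
  exact ⟨(_, _), ⟨rfl, rfl⟩, fun p ⟨hz, hx⟩ => Prod.ext hx hz⟩
end

section
/- Let b ∈ k with b ≠ 0, let X ∈ M_2(k[ε]) with det X = 1, and set N = 1 + ε·[[0,b],[0,0]] ∈ M_2(k[ε]). Then X·N = N·X if and only if there exists β ∈ k such that X̄ = [[1,β],[0,1]] or X̄ = −[[1,β],[0,1]], where X̄ ∈ M_2(k) is the entrywise image of X under the projection k[ε] → k sending a + bε to a; that is, the centraliser of N in SL_2(k[ε]) consists exactly of the determinant-one matrices whose reduction modulo ε is ± a unipotent upper-triangular matrix. -/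
/-!
Write `N = 1 + ε M`. Since `ε` is central, `X N = N X` says `ε (X M - M X) = 0`, and
`ε y = 0` exactly when `y` reduces to `0` modulo `ε`; so `X` commutes with `N` iff its
reduction `X̄` commutes with `M̄ = [[0,b],[0,0]]`. For `b ≠ 0` this means `X̄` is upper
triangular with equal diagonal entries `a`, and `det X̄ = 1` forces `a² = 1`, i.e. `a = ±1`.
-/

open DualNumber TrivSqZeroExt

namespace DualNumber

variable {R : Type*} [CommRing R]

theorem eps_mul_eq_zero_iff (x : R[ε]) : (ε : R[ε]) * x = 0 ↔ x.fst = 0 := by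
  simp [TrivSqZeroExt.ext_iff]

variable {n : Type*}

theorem eps_smul_matrix_eq_zero_iff (A : Matrix n n R[ε]) :
    (ε : R[ε]) • A = 0 ↔ A.map fst = 0 := by
  simp only [← Matrix.ext_iff, Matrix.smul_apply, smul_eq_mul, eps_mul_eq_zero_iff,
    Matrix.map_apply, Matrix.zero_apply]

theorem map_fst_map_algebraMap (A : Matrix n n R) :
    (A.map (algebraMap R R[ε])).map fst = A := by
  ext; rfl

variable [Fintype n]

theorem map_fst_mul (A B : Matrix n n R[ε]) : (A * B).map fst = A.map fst * B.map fst :=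
  Matrix.map_mul (f := (fstHom R R R).toRingHom)

variable [DecidableEq n]

theorem det_map_fst (A : Matrix n n R[ε]) : (A.map fst).det = A.det.fst :=
  ((fstHom R R R).toRingHom.map_det A).symm

theorem commute_one_add_eps_smul_iff (X M : Matrix n n R[ε]) :
    Commute X (1 + (ε : R[ε]) • M) ↔ Commute (X.map fst) (M.map fst) := by
  have hXN : X * (1 + (ε : R[ε]) • M) = X + (ε : R[ε]) • (X * M) := by
    rw [mul_add, mul_one, Matrix.mul_smul]
  have hNX : (1 + (ε : R[ε]) • M) * X = X + (ε : R[ε]) • (M * X) := by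
    rw [add_mul, one_mul, Matrix.smul_mul]
  rw [Commute, SemiconjBy, Commute, SemiconjBy, hXN, hNX, add_right_inj, ← sub_eq_zero,
    ← smul_sub, eps_smul_matrix_eq_zero_iff, ← sub_eq_zero (b := _ * _), ← map_fst_mul,
    ← map_fst_mul, Matrix.map_sub _ fst_sub]

end DualNumber

theorem Matrix.commute_fin_two_upper_nilpotent_iff {R : Type*} [CommRing R] [NoZeroDivisors R]
    {b : R} (hb : b ≠ 0) (A : Matrix (Fin 2) (Fin 2) R) :
    Commute A !![0, b; 0, 0] ↔ A 1 0 = 0 ∧ A 0 0 = A 1 1 := by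
  rw [Commute, SemiconjBy, ← Matrix.ext_iff]
  simp [Fin.forall_fin_two, Matrix.mul_apply, hb, mul_comm _ b, mul_right_inj' hb]
  tauto

theorem Matrix.fin_two_upper_scalar_diag_iff_of_det_eq_one {R : Type*} [CommRing R]
    [NoZeroDivisors R] (A : Matrix (Fin 2) (Fin 2) R) (hA : A.det = 1) :
    A 1 0 = 0 ∧ A 0 0 = A 1 1 ↔ ∃ β, A = !![1, β; 0, 1] ∨ A = -!![1, β; 0, 1] := by
  rw [Matrix.det_fin_two] at hA
  constructor
  · rintro ⟨h10, h11⟩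
    rw [h10, ← h11, mul_zero, sub_zero] at hA
    rcases mul_self_eq_one_iff.mp hA with h | h
    · refine ⟨A 0 1, Or.inl ?_⟩
      ext i j
      fin_cases i <;> fin_cases j <;> simp [h10, h, ← h11]
    · refine ⟨-A 0 1, Or.inr ?_⟩
      ext i j
      fin_cases i <;> fin_cases j <;> simp [h10, h, ← h11]
  · rintro ⟨β, rfl | rfl⟩ <;> simp

/-- Let `b ≠ 0` in a field `k`, let `X ∈ M_2(k[ε])` with `det X = 1`, and let
`N = 1 + ε·[[0,b],[0,0]]`. Then `X·N = N·X` if and only if the reduction `X̄` of `X` modulo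
`ε` is `±` a unipotent upper-triangular matrix `[[1,β],[0,1]]`: the centraliser of `N` in
`SL_2(k[ε])` consists exactly of the determinant-one matrices whose reduction modulo `ε` is
`±` unipotent upper-triangular. -/
theorem stmt12 (k : Type*) [Field k] (b : k) (hb : b ≠ 0)
    (X : Matrix (Fin 2) (Fin 2) (DualNumber k)) (hX : X.det = 1) :
    X * (1 + (DualNumber.eps : DualNumber k) •
          (!![(0 : k), b; 0, 0]).map (fun a => algebraMap k (DualNumber k) a)) =
        (1 + (DualNumber.eps : DualNumber k) •
          (!![(0 : k), b; 0, 0]).map (fun a => algebraMap k (DualNumber k) a)) * X ↔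
      ∃ β : k, X.map (fun d => TrivSqZeroExt.fst d) = !![1, β; 0, 1] ∨
        X.map (fun d => TrivSqZeroExt.fst d) = -!![1, β; 0, 1] := by
  have hdet : (X.map fst).det = 1 := by rw [det_map_fst, hX, fst_one]
  rw [← Matrix.fin_two_upper_scalar_diag_iff_of_det_eq_one _ hdet,
    ← Matrix.commute_fin_two_upper_nilpotent_iff hb,
    ← map_fst_map_algebraMap !![(0 : k), b; 0, 0]]
  exact commute_one_add_eps_smul_iff X _
end
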